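/- arXiv:1904.03559 — 3 statements merged into one kernel-verified Lean document; each statement's English description precedes it below -/
import Mathlib

section
/- Define the informational mean of positive reals a₁,…,aₙ with weights w₁,…,wₙ (wᵢ ≥ 0, Σᵢ wᵢ = 1) as M(a₁,…,aₙ; w₁,…,wₙ) = ∫_ℝ (p'(x))²/p(x) dx, where p(x) = Σᵢ wᵢ φ_{σᵢ}(x) with σᵢ² = 1/aᵢ and φ_σ(x) = (2πσ²)^{-1/2} exp(−x²/(2σ²)). Then for every λ > 0, M(λa₁,…,λaₙ; w₁,…,wₙ) = λ · M(a₁,…,aₙ; w₁,…,wₙ); that is, the informational mean is positively homogeneous of degree one in (a₁,…,aₙ). -/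
open MeasureTheory Real

/-- The centered Gaussian density with scale `σ`: `φ_σ(x) = (2πσ²)^{-1/2} exp(−x²/(2σ²))`. -/
noncomputable def gaussianDensity (σ : ℝ) (x : ℝ) : ℝ :=
  (2 * π * σ ^ 2) ^ (-(1 : ℝ) / 2) * Real.exp (-x ^ 2 / (2 * σ ^ 2))

/-- The informational mean of positive reals `a₁,…,aₙ` with weights `w₁,…,wₙ`: the Fisher
information of the Gaussian scale mixture `p(x) = Σᵢ wᵢ φ_{σᵢ}(x)` with `σᵢ² = 1/aᵢ`. -/
noncomputable def informationalMean (n : ℕ) (w a : Fin n → ℝ) : ℝ :=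
  ∫ x : ℝ, (deriv (fun y => ∑ i, w i * gaussianDensity (Real.sqrt (1 / a i)) y) x) ^ 2 /
    (∑ i, w i * gaussianDensity (Real.sqrt (1 / a i)) x)

lemma gaussian_diff (σ : ℝ) : Differentiable ℝ (gaussianDensity σ) := by
  unfold gaussianDensity
  exact (Real.differentiable_exp.comp ((differentiable_pow 2).neg.div_const _)).const_mul _

lemma gaussian_scale {a lam : ℝ} (ha : 0 < a) (hlam : 0 < lam) (x : ℝ) :
    gaussianDensity (Real.sqrt (1 / (lam * a))) x
      = Real.sqrt lam * gaussianDensity (Real.sqrt (1 / a)) (Real.sqrt lam * x) := by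
  unfold gaussianDensity
  rw [Real.sq_sqrt (by positivity), Real.sq_sqrt (by positivity : (0:ℝ) ≤ 1 / a)]
  have h1 : 2 * π * (1 / (lam * a)) = (2 * π * (1 / a)) * lam⁻¹ := by
    field_simp
  have h2 : ((2 * π * (1 / a)) * lam⁻¹) ^ (-(1:ℝ) / 2)
      = (2 * π * (1 / a)) ^ (-(1:ℝ) / 2) * Real.sqrt lam := by
    rw [Real.mul_rpow (by positivity) (by positivity), Real.inv_rpow hlam.le,
      neg_div, Real.rpow_neg hlam.le, inv_inv, Real.sqrt_eq_rpow]
  have h3 : -x ^ 2 / (2 * (1 / (lam * a))) = -(Real.sqrt lam * x) ^ 2 / (2 * (1 / a)) := by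
    rw [mul_pow, Real.sq_sqrt hlam.le]
    field_simp
  rw [h1, h2, h3]
  ring

/-- The informational mean is positively homogeneous of degree one in `(a₁,…,aₙ)`. -/
theorem informationalMean_homogeneous (n : ℕ) (hn : 1 ≤ n) (w a : Fin n → ℝ)
    (hw : ∀ i, 0 ≤ w i) (hws : ∑ i, w i = 1) (ha : ∀ i, 0 < a i)
    (lam : ℝ) (hlam : 0 < lam) :
    informationalMean n w (fun i => lam * a i) = lam * informationalMean n w a := by
  set s := Real.sqrt lam with hs_def
  have hs : 0 < s := Real.sqrt_pos.mpr hlam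
  have hs2 : s ^ 2 = lam := Real.sq_sqrt hlam.le
  set p : ℝ → ℝ := fun y => ∑ i, w i * gaussianDensity (Real.sqrt (1 / a i)) y with hp_def
  have hpdiff : Differentiable ℝ p := by
    rw [hp_def]
    exact Differentiable.fun_sum fun i _ => (gaussian_diff _).const_mul _
  have hfunx : ∀ y, ∑ i, w i * gaussianDensity (Real.sqrt (1 / (lam * a i))) y
      = s * p (s * y) := by
    intro y
    rw [hp_def]
    simp only [Finset.mul_sum]
    exact Finset.sum_congr rfl fun i _ => by rw [gaussian_scale (ha i) hlam]; ring
  have hderiv : ∀ x, deriv (fun y => s * p (s * y)) x = lam * deriv p (s * x) := by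
    intro x
    have hid : HasDerivAt (fun y : ℝ => s * y) s x := by
      simpa using (hasDerivAt_id x).const_mul s
    have h1 : HasDerivAt (fun y => p (s * y)) (deriv p (s * x) * s) x :=
      ((hpdiff (s * x)).hasDerivAt).comp x hid
    have h2 : HasDerivAt (fun y => s * p (s * y)) (s * (deriv p (s * x) * s)) x :=
      h1.const_mul s
    rw [h2.deriv, ← hs2]
    ring
  unfold informationalMean
  simp_rw [hfunx]
  have key : ∀ x, (deriv (fun y => s * p (s * y)) x) ^ 2 / (s * p (s * x))
      = (lam ^ 2 / s) * ((fun u => (deriv p u) ^ 2 / p u) (s * x)) := by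
    intro x
    rw [hderiv x, mul_pow, mul_div_mul_comm]
  simp_rw [key]
  rw [MeasureTheory.integral_const_mul]
  have hcomp : ∫ x : ℝ, deriv p (s * x) ^ 2 / p (s * x) = |s⁻¹| • ∫ u : ℝ, deriv p u ^ 2 / p u :=
    MeasureTheory.Measure.integral_comp_mul_left (fun u => deriv p u ^ 2 / p u) s
  rw [hcomp, abs_of_pos (inv_pos.mpr hs), smul_eq_mul, ← mul_assoc]
  have hrfl : (∫ x : ℝ, deriv (fun y => ∑ i, w i * gaussianDensity (Real.sqrt (1 / a i)) y) x ^ 2 /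
      ∑ i, w i * gaussianDensity (Real.sqrt (1 / a i)) x) = ∫ u : ℝ, deriv p u ^ 2 / p u := rfl
  rw [hrfl]
  congr 1
  rw [← hs2]
  field_simp
end

section
/- Let a₁,…,aₙ be positive reals and w₁,…,wₙ nonnegative weights with Σᵢ wᵢ = 1, and let M(a₁,…,aₙ; w₁,…,wₙ) be the informational mean, i.e. the Fisher information ∫_ℝ (p'(x))²/p(x) dx of the mixture density p(x) = Σᵢ wᵢ φ_{σᵢ}(x) with σᵢ² = 1/aᵢ. Then min(a₁,…,aₙ) ≤ M(a₁,…,aₙ; w₁,…,wₙ) ≤ max(a₁,…,aₙ); together with positive homogeneity this shows the informational mean is a mean function. -/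
/-!
Writing `p = ∑ᵢ wᵢ φ_{σᵢ}` and `q = ∑ᵢ wᵢ aᵢ φ_{σᵢ}`, the Gaussian identity `φ_σ'(x) = -x φ_σ(x)/σ²`
gives `p' = -x q`, so the Fisher information of `p` is `∫ x² q(x) · (q(x)/p(x)) dx`. Pointwise,
`q/p` is a convex combination of the `aᵢ`, hence lies in `[min aᵢ, max aᵢ]`, while `x² q(x)` is a
probability density: its mass is `∑ᵢ wᵢ aᵢ σᵢ² = ∑ᵢ wᵢ = 1`.
-/

open MeasureTheory Real

open ProbabilityTheory

lemma gaussianDensity_eq_gaussianPDFReal (σ : ℝ) :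
    gaussianDensity σ = gaussianPDFReal 0 (σ ^ 2).toNNReal := by
  ext x
  rw [gaussianDensity, gaussianPDFReal, coe_toNNReal _ (sq_nonneg σ), sub_zero, sqrt_eq_rpow,
    ← rpow_neg (by positivity), neg_div]

lemma gaussianDensity_nonneg (σ x : ℝ) : 0 ≤ gaussianDensity σ x := by
  rw [gaussianDensity_eq_gaussianPDFReal]
  exact gaussianPDFReal_nonneg _ _ x

lemma gaussianDensity_pos {σ : ℝ} (hσ : σ ≠ 0) (x : ℝ) : 0 < gaussianDensity σ x := by
  rw [gaussianDensity_eq_gaussianPDFReal]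
  exact gaussianPDFReal_pos _ _ x (by positivity)

@[fun_prop]
lemma continuous_gaussianDensity (σ : ℝ) : Continuous (gaussianDensity σ) := by
  unfold gaussianDensity
  fun_prop

lemma hasDerivAt_gaussianDensity (σ x : ℝ) :
    HasDerivAt (gaussianDensity σ) (-(x / σ ^ 2) * gaussianDensity σ x) x := by
  refine (((hasDerivAt_pow 2 x).neg.div_const (2 * σ ^ 2)).exp.const_mul
    ((2 * π * σ ^ 2) ^ (-(1 : ℝ) / 2))).congr_deriv ?_
  simp only [gaussianDensity, Pi.neg_apply]
  ring

lemma integral_sq_mul_gaussianDensity {σ : ℝ} (hσ : σ ≠ 0) :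
    ∫ x, x ^ 2 * gaussianDensity σ x = σ ^ 2 := by
  have hv : (σ ^ 2).toNNReal ≠ 0 := by positivity
  have h := variance_fun_id_gaussianReal (μ := 0) (v := (σ ^ 2).toNNReal)
  rw [variance_eq_integral measurable_id'.aemeasurable, integral_id_gaussianReal,
    integral_gaussianReal_eq_integral_smul hv, coe_toNNReal _ (sq_nonneg σ)] at h
  simpa [gaussianDensity_eq_gaussianPDFReal, mul_comm] using h

lemma integrable_sq_mul_gaussianDensity {σ : ℝ} (hσ : σ ≠ 0) :
    Integrable fun x => x ^ 2 * gaussianDensity σ x :=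
  .of_integral_ne_zero (by rw [integral_sq_mul_gaussianDensity hσ]; positivity)

section Mixture

variable {ι : Type*} [Fintype ι]

noncomputable def gaussianMixture (w a : ι → ℝ) (x : ℝ) : ℝ :=
  ∑ i, w i * gaussianDensity √(1 / a i) x

lemma continuous_gaussianMixture (w a : ι → ℝ) : Continuous (gaussianMixture w a) := by
  unfold gaussianMixture
  fun_prop

lemma gaussianMixture_nonneg {w : ι → ℝ} (hw : ∀ i, 0 ≤ w i) (a : ι → ℝ) (x : ℝ) :
    0 ≤ gaussianMixture w a x :=
  Finset.sum_nonneg fun i _ => mul_nonneg (hw i) (gaussianDensity_nonneg _ x)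

lemma gaussianMixture_pos {w a : ι → ℝ} (hw : ∀ i, 0 ≤ w i) {j : ι} (hwj : 0 < w j)
    (haj : 0 < a j) (x : ℝ) : 0 < gaussianMixture w a x :=
  Finset.sum_pos' (fun i _ => mul_nonneg (hw i) (gaussianDensity_nonneg _ x))
    ⟨j, Finset.mem_univ j, mul_pos hwj (gaussianDensity_pos (by positivity) x)⟩

lemma mul_gaussianMixture_le {w a : ι → ℝ} {m : ℝ} (hw : ∀ i, 0 ≤ w i) (hm : ∀ i, m ≤ a i)
    (x : ℝ) : m * gaussianMixture w a x ≤ gaussianMixture (w * a) a x := by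
  rw [gaussianMixture, gaussianMixture, Finset.mul_sum]
  refine Finset.sum_le_sum fun i _ => ?_
  have := hw i
  have := gaussianDensity_nonneg √(1 / a i) x
  rw [Pi.mul_apply, mul_left_comm, mul_assoc]
  gcongr
  exact hm i

lemma gaussianMixture_le_mul {w a : ι → ℝ} {M : ℝ} (hw : ∀ i, 0 ≤ w i) (hM : ∀ i, a i ≤ M)
    (x : ℝ) : gaussianMixture (w * a) a x ≤ M * gaussianMixture w a x := by
  rw [gaussianMixture, gaussianMixture, Finset.mul_sum]
  refine Finset.sum_le_sum fun i _ => ?_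
  have := hw i
  have := gaussianDensity_nonneg √(1 / a i) x
  rw [Pi.mul_apply, mul_left_comm, mul_assoc]
  gcongr
  exact hM i

lemma gaussianMixture_mul_div_mem_Icc {w a : ι → ℝ} {m M : ℝ} (hw : ∀ i, 0 ≤ w i) {j : ι}
    (hwj : 0 < w j) (haj : 0 < a j) (hm : ∀ i, m ≤ a i) (hM : ∀ i, a i ≤ M) (x : ℝ) :
    gaussianMixture (w * a) a x / gaussianMixture w a x ∈ Set.Icc m M := by
  have hp := gaussianMixture_pos hw hwj haj x
  rw [Set.mem_Icc, le_div_iff₀ hp, div_le_iff₀ hp]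
  exact ⟨mul_gaussianMixture_le hw hm x, gaussianMixture_le_mul hw hM x⟩

lemma hasDerivAt_gaussianMixture (w : ι → ℝ) {a : ι → ℝ} (ha : ∀ i, 0 ≤ a i) (x : ℝ) :
    HasDerivAt (gaussianMixture w a) (-x * gaussianMixture (w * a) a x) x := by
  refine (HasDerivAt.fun_sum fun i _ =>
    (hasDerivAt_gaussianDensity √(1 / a i) x).const_mul (w i)).congr_deriv ?_
  rw [gaussianMixture, Finset.mul_sum]
  refine Finset.sum_congr rfl fun i _ => ?_
  rw [sq_sqrt (by simpa using ha i), Pi.mul_apply, one_div, div_inv_eq_mul]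
  ring

lemma integrable_sq_mul_gaussianMixture (w : ι → ℝ) {a : ι → ℝ} (ha : ∀ i, 0 < a i) :
    Integrable fun x => x ^ 2 * gaussianMixture w a x := by
  simp only [gaussianMixture, Finset.mul_sum, mul_left_comm _ (w _)]
  exact integrable_finsetSum _ fun i _ =>
    (integrable_sq_mul_gaussianDensity (sqrt_pos.2 (one_div_pos.2 (ha i))).ne').const_mul (w i)

lemma integral_sq_mul_gaussianMixture (w : ι → ℝ) {a : ι → ℝ} (ha : ∀ i, 0 < a i) :
    ∫ x, x ^ 2 * gaussianMixture w a x = ∑ i, w i / a i := by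
  have hσ i : √(1 / a i) ≠ 0 := (sqrt_pos.2 (one_div_pos.2 (ha i))).ne'
  simp only [gaussianMixture, Finset.mul_sum, mul_left_comm _ (w _)]
  rw [integral_finsetSum _ fun i _ => (integrable_sq_mul_gaussianDensity (hσ i)).const_mul (w i)]
  refine Finset.sum_congr rfl fun i _ => ?_
  rw [integral_const_mul, integral_sq_mul_gaussianDensity (hσ i),
    sq_sqrt (by simpa using (ha i).le), mul_one_div]

end Mixture

lemma integral_mul_mem_Icc_of_mem_Icc {α : Type*} [MeasurableSpace α] {μ : Measure α}
    {g r : α → ℝ} {m M : ℝ} (hg : Integrable g μ) (hg0 : ∀ᵐ x ∂μ, 0 ≤ g x)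
    (hr : AEStronglyMeasurable r μ) (hrI : ∀ᵐ x ∂μ, r x ∈ Set.Icc m M) :
    ∫ x, g x * r x ∂μ ∈ Set.Icc (m * ∫ x, g x ∂μ) (M * ∫ x, g x ∂μ) := by
  have hgr : Integrable (fun x => g x * r x) μ :=
    hg.mul_bdd hr (hrI.mono fun x hx => abs_le_max_abs_abs hx.1 hx.2)
  rw [← integral_const_mul, ← integral_const_mul]
  constructor
  · refine integral_mono_ae (hg.const_mul m) hgr ?_
    filter_upwards [hg0, hrI] with x hgx hrx
    nlinarith [hrx.1]
  · refine integral_mono_ae hgr (hg.const_mul M) ?_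
    filter_upwards [hg0, hrI] with x hgx hrx
    nlinarith [hrx.2]

lemma informationalMean_eq_integral {n : ℕ} (w : Fin n → ℝ) {a : Fin n → ℝ}
    (ha : ∀ i, 0 ≤ a i) :
    informationalMean n w a = ∫ x, x ^ 2 * gaussianMixture (w * a) a x *
      (gaussianMixture (w * a) a x / gaussianMixture w a x) := by
  refine integral_congr_ae (ae_of_all _ fun x => ?_)
  change deriv (gaussianMixture w a) x ^ 2 / gaussianMixture w a x = _
  rw [(hasDerivAt_gaussianMixture w ha x).deriv]
  ring

/-- The informational mean lies between the minimum and the maximum of its arguments. -/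
theorem informationalMean_between_min_max (n : ℕ) (hn : 0 < n) (w a : Fin n → ℝ)
    (hw : ∀ i, 0 ≤ w i) (hws : ∑ i, w i = 1) (ha : ∀ i, 0 < a i) :
    Finset.univ.inf' (Finset.univ_nonempty_iff.mpr (Fin.pos_iff_nonempty.mp hn)) a ≤
        informationalMean n w a ∧
      informationalMean n w a ≤
        Finset.univ.sup' (Finset.univ_nonempty_iff.mpr (Fin.pos_iff_nonempty.mp hn)) a := by
  have hne : (Finset.univ : Finset (Fin n)).Nonempty :=
    Finset.univ_nonempty_iff.mpr (Fin.pos_iff_nonempty.mp hn)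
  obtain ⟨j, -, hwj⟩ : ∃ j ∈ Finset.univ, (0 : ℝ) < w j :=
    Finset.exists_lt_of_sum_lt (by simp [hws])
  have hratio := gaussianMixture_mul_div_mem_Icc (m := Finset.univ.inf' hne a)
    (M := Finset.univ.sup' hne a) hw hwj (ha j) (fun i => Finset.inf'_le a (Finset.mem_univ i))
    (fun i => Finset.le_sup' a (Finset.mem_univ i))
  have hmass : ∫ x, x ^ 2 * gaussianMixture (w * a) a x = 1 := by
    rw [integral_sq_mul_gaussianMixture _ ha, ← hws]
    exact Finset.sum_congr rfl fun i _ => mul_div_cancel_right₀ _ (ha i).ne'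
  have h := integral_mul_mem_Icc_of_mem_Icc (integrable_sq_mul_gaussianMixture (w * a) ha)
    (ae_of_all _ fun x => mul_nonneg (sq_nonneg x)
      (gaussianMixture_nonneg (fun i => mul_nonneg (hw i) (ha i).le) a x))
    ((continuous_gaussianMixture _ _).measurable.div
      (continuous_gaussianMixture w a).measurable).aestronglyMeasurable (ae_of_all _ hratio)
  rw [hmass, mul_one, mul_one] at h
  rw [informationalMean_eq_integral w fun i => (ha i).le]
  exact h
end

section
/- Let A₁,…,Aₙ be Hermitian positive definite d×d complex matrices and let B₁,…,Bₙ be d×d complex matrices with Σᵢ Bᵢ* Bᵢ = I, where Bᵢ* denotes the conjugate transpose. Then the matrix inverse function is hyperconvex: (Σᵢ Bᵢ* Aᵢ Bᵢ)⁻¹ ≤ Σᵢ Bᵢ* Aᵢ⁻¹ Bᵢ in the Loewner order, i.e. Σᵢ Bᵢ* Aᵢ⁻¹ Bᵢ − (Σᵢ Bᵢ* Aᵢ Bᵢ)⁻¹ is positive semidefinite (note Σᵢ Bᵢ* Aᵢ Bᵢ is Hermitian positive definite, hence invertible). -/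
/-!
Put `T = Σᵢ Bᵢ* Aᵢ Bᵢ` and `S = Σᵢ Bᵢ* Aᵢ⁻¹ Bᵢ`. Each block matrix `[[Aᵢ⁻¹, 1], [1, Aᵢ]]` is
positive semidefinite (its Schur complement is `0`), so conjugating by `diag(Bᵢ, Bᵢ)` and summing
gives `[[S, 1], [1, T]] ≥ 0`, using `Σᵢ Bᵢ* Bᵢ = 1`. Since `T` is positive definite, the Schur
complement `S - T⁻¹` of this block matrix is positive semidefinite.
-/

open Matrix
open scoped ComplexOrder

namespace Matrix

variable {ι m n 𝕜 : Type*} [RCLike 𝕜]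

theorem sum_fromBlocks {α : Type*} [AddCommMonoid α] (s : Finset ι)
    (P : ι → Matrix m m α) (Q : ι → Matrix m n α) (R : ι → Matrix n m α)
    (S : ι → Matrix n n α) :
    ∑ i ∈ s, fromBlocks (P i) (Q i) (R i) (S i) =
      fromBlocks (∑ i ∈ s, P i) (∑ i ∈ s, Q i) (∑ i ∈ s, R i) (∑ i ∈ s, S i) := by
  ext (j | j) (k | k) <;> simp [sum_apply]

theorem conjTranspose_fromBlocks_diag_mul_mul [Fintype m] (B : Matrix m n 𝕜)
    (P Q R S : Matrix m m 𝕜) :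
    (fromBlocks B 0 0 B)ᴴ * fromBlocks P Q R S * fromBlocks B 0 0 B =
      fromBlocks (Bᴴ * P * B) (Bᴴ * Q * B) (Bᴴ * R * B) (Bᴴ * S * B) := by
  simp [fromBlocks_conjTranspose, fromBlocks_multiply]

theorem PosDef.posSemidef_fromBlocks_inv_one_one_self [Fintype n] [DecidableEq n]
    {A : Matrix n n 𝕜} (hA : A.PosDef) :
    (fromBlocks A⁻¹ 1 1 A).PosSemidef := by
  have : Invertible A := hA.isUnit.invertible
  simpa using (PosDef.fromBlocks₂₂ A⁻¹ 1 hA).mpr (by simpa using PosSemidef.zero)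

theorem posSemidef_fromBlocks_sum_conj_inv_one_one_self [Fintype ι] [Fintype m] [Fintype n]
    [DecidableEq n] {A : ι → Matrix n n 𝕜}
    (hA : ∀ i, (A i).PosDef) (B : ι → Matrix n m 𝕜) :
    (fromBlocks (∑ i, (B i)ᴴ * (A i)⁻¹ * B i) (∑ i, (B i)ᴴ * B i) (∑ i, (B i)ᴴ * B i)
      (∑ i, (B i)ᴴ * A i * B i)).PosSemidef := by
  have hterm : ∀ i, fromBlocks ((B i)ᴴ * (A i)⁻¹ * B i) ((B i)ᴴ * B i) ((B i)ᴴ * B i)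
      ((B i)ᴴ * A i * B i) =
      (fromBlocks (B i) 0 0 (B i))ᴴ * fromBlocks (A i)⁻¹ 1 1 (A i) * fromBlocks (B i) 0 0 (B i) :=
    fun i => by rw [conjTranspose_fromBlocks_diag_mul_mul, Matrix.mul_one]
  rw [← sum_fromBlocks, Finset.sum_congr rfl fun i _ => hterm i]
  exact posSemidef_sum _ fun i _ =>
    (hA i).posSemidef_fromBlocks_inv_one_one_self.conjTranspose_mul_mul_same _

theorem posDef_sum_conjTranspose_mul_mul [Fintype ι] [Fintype m] [Fintype n]
    {A : ι → Matrix n n 𝕜} (hA : ∀ i, (A i).PosDef) {B : ι → Matrix n m 𝕜}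
    (hB : (∑ i, (B i)ᴴ * B i).PosDef) :
    (∑ i, (B i)ᴴ * A i * B i).PosDef := by
  have hpsd : ∀ i, ((B i)ᴴ * A i * B i).PosSemidef := fun i =>
    (hA i).posSemidef.conjTranspose_mul_mul_same _
  refine PosDef.of_dotProduct_mulVec_pos (posSemidef_sum _ fun i _ => hpsd i).1 fun x hx => ?_
  obtain ⟨i, hi⟩ : ∃ i, B i *ᵥ x ≠ 0 := by
    by_contra! h
    have hzero : (∑ i, (B i)ᴴ * B i) *ᵥ x = 0 := by
      simp [sum_mulVec, ← mulVec_mulVec, h]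
    exact (hB.dotProduct_mulVec_pos hx).ne' (by simp [hzero])
  simp only [sum_mulVec, dotProduct_sum]
  refine Finset.sum_pos' (fun j _ => (hpsd j).dotProduct_mulVec_nonneg x)
    ⟨i, Finset.mem_univ _, ?_⟩
  simpa only [star_mulVec, dotProduct_mulVec, vecMul_vecMul] using (hA i).dotProduct_mulVec_pos hi

end Matrix

/-- Hyperconvexity of the matrix inverse function: if the `Aᵢ` are Hermitian positive definite
and the matrix weights satisfy `Σᵢ Bᵢ* Bᵢ = I`, then
`(Σᵢ Bᵢ* Aᵢ Bᵢ)⁻¹ ≤ Σᵢ Bᵢ* Aᵢ⁻¹ Bᵢ` in the Loewner order. -/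
theorem matrix_inv_hyperconvex (n d : ℕ)
    (A : Fin n → Matrix (Fin d) (Fin d) ℂ) (hA : ∀ i, (A i).PosDef)
    (B : Fin n → Matrix (Fin d) (Fin d) ℂ) (hB : ∑ i, (B i)ᴴ * B i = 1) :
    (∑ i, (B i)ᴴ * (A i)⁻¹ * B i - (∑ i, (B i)ᴴ * A i * B i)⁻¹).PosSemidef := by
  have hT : (∑ i, (B i)ᴴ * A i * B i).PosDef :=
    posDef_sum_conjTranspose_mul_mul hA (by rw [hB]; exact PosDef.one)
  have := hT.isUnit.invertible
  have hblock : (fromBlocks (∑ i, (B i)ᴴ * (A i)⁻¹ * B i) 1 1ᴴ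
      (∑ i, (B i)ᴴ * A i * B i)).PosSemidef := by
    simpa [hB] using posSemidef_fromBlocks_sum_conj_inv_one_one_self hA B
  simpa using (PosDef.fromBlocks₂₂ _ 1 hT).mp hblock
end
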